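/- arXiv:1901.02028 — 3 statements merged into one kernel-verified Lean document; each statement's English description precedes it below -/
import Mathlib

section
/- Lemma 8.9: Let A be a commutative ring, let X and Y be derivations of A, and let k̄, P̄ ∈ A be elements such that X(Y(f)) − Y(X(f)) = −Y(k̄)·Y(f) for every f ∈ A, and X(P̄) = −P̄·Y(k̄) − Y(Y(k̄)). Then Y(Y(Y(k̄))) + Y(Y(k̄))·P̄ + X(Y(P̄)) = −2·Y(k̄)·Y(P̄). -/
/-- Lemma 8.9: for derivations `X, Y` of a commutative ring `A` with
`X ∘ Y - Y ∘ X = -(Y k̄) • Y` and `X P̄ = -P̄ * Y k̄ - Y (Y k̄)`, one has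
`Y (Y (Y k̄)) + Y (Y k̄) * P̄ + X (Y P̄) = -2 * Y k̄ * Y P̄`. -/
theorem stmt_3 {A : Type*} [CommRing A] (X Y : Derivation ℤ A A) (kbar Pbar : A)
    (hcomm : ∀ f : A, X (Y f) - Y (X f) = -Y kbar * Y f)
    (hP : X Pbar = -Pbar * Y kbar - Y (Y kbar)) :
    Y (Y (Y kbar)) + Y (Y kbar) * Pbar + X (Y Pbar) = -2 * Y kbar * Y Pbar := by
  have h := hcomm Pbar
  rw [hP] at h
  simp only [map_sub, map_neg, Derivation.leibniz, smul_eq_mul] at h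
  linear_combination h
end

section
/- Lemma 8.8: Let F be a field of characteristic zero, let X and Y be derivations of F, and let k, k̄, P̄ ∈ F be elements such that X(k) = 0, X(Y(f)) − Y(X(f)) = −Y(k̄)·Y(f) for every f ∈ F, X(P̄) = −P̄·Y(k̄) − Y(Y(k̄)), and Y(k) ≠ 0. Define H₀ := −(1/6)·Y(Y(Y(k)))/Y(k) + (2/9)·Y(Y(k))²/Y(k)² + (1/18)·(Y(Y(k))/Y(k))·P̄ + (1/6)·Y(P̄) − (1/9)·P̄². Then X(H₀) = −2·Y(k̄)·H₀. -/
/-- Lemma 8.8: with `H₀` Pocchiola's function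
`H₀ = -(1/6) Y³k/Yk + (2/9) (Y²k)²/(Yk)² + (1/18) (Y²k/Yk) P̄ + (1/6) Y P̄ - (1/9) P̄²`,
one has `X H₀ = -2 * Y k̄ * H₀`. -/
theorem stmt_5 {F : Type*} [Field F] [CharZero F] (X Y : Derivation ℤ F F)
    (k kbar Pbar : F)
    (hXk : X k = 0)
    (hcomm : ∀ f : F, X (Y f) - Y (X f) = -Y kbar * Y f)
    (hP : X Pbar = -Pbar * Y kbar - Y (Y kbar))
    (hk : Y k ≠ 0)
    (H0 : F)
    (hH0 : H0 = -(1/6 : F) * (Y (Y (Y k)) / Y k)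
        + (2/9 : F) * ((Y (Y k)) ^ 2 / (Y k) ^ 2)
        + (1/18 : F) * (Y (Y k) / Y k) * Pbar
        + (1/6 : F) * Y Pbar - (1/9 : F) * Pbar ^ 2) :
    X H0 = -2 * Y kbar * H0 := by
  have h1 : X (Y k) = -Y kbar * Y k := by
    have := hcomm k
    rw [hXk, map_zero, sub_zero] at this
    exact this
  have h2 : X (Y (Y k)) = -(Y (Y kbar)) * Y k - 2 * Y kbar * Y (Y k) := by
    have := hcomm (Y k)
    rw [h1] at this
    have hY : Y (-Y kbar * Y k) = -(Y (Y kbar)) * Y k + (-Y kbar) * Y (Y k) := by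
      rw [Derivation.leibniz]
      simp [smul_eq_mul]; ring
    rw [hY] at this
    linear_combination this
  have h3 : X (Y (Y (Y k))) = -(Y (Y (Y kbar))) * Y k - 3 * Y (Y kbar) * Y (Y k)
      - 3 * Y kbar * Y (Y (Y k)) := by
    have := hcomm (Y (Y k))
    rw [h2] at this
    have hY : Y (-(Y (Y kbar)) * Y k - 2 * Y kbar * Y (Y k))
        = -(Y (Y (Y kbar))) * Y k + (-(Y (Y kbar))) * Y (Y k)
          - 2 * (Y (Y kbar)) * Y (Y k) - 2 * Y kbar * Y (Y (Y k)) := by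
      have hY2 : Y (2:F) = 0 := by
        rw [show (2:F)=((2:ℕ):F) by norm_num]; exact Derivation.map_natCast Y 2
      rw [map_sub, Derivation.leibniz, Derivation.leibniz]
      simp [smul_eq_mul, hY2]; ring
    rw [hY] at this
    linear_combination this
  have h4 : X (Y Pbar) = -Y Pbar * Y kbar - Pbar * Y (Y kbar) - Y (Y (Y kbar))
      - Y kbar * Y Pbar := by
    have := hcomm Pbar
    rw [hP] at this
    have hY : Y (-Pbar * Y kbar - Y (Y kbar))
        = -Y Pbar * Y kbar - Pbar * Y (Y kbar) - Y (Y (Y kbar)) := by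
      rw [map_sub, Derivation.leibniz]
      simp [smul_eq_mul]; ring
    rw [hY] at this
    linear_combination this
  have hc : ∀ n : ℕ, X ((1:F)/(n:F)) = 0 := by
    intro n
    rw [Derivation.leibniz_div, Derivation.map_one_eq_zero, Derivation.map_natCast]
    simp
  have c6 : X ((1:F)/6) = 0 := by simpa using hc 6
  have c9 : X ((1:F)/9) = 0 := by simpa using hc 9
  have c18 : X ((1:F)/18) = 0 := by simpa using hc 18
  have c29 : X ((2:F)/9) = 0 := by
    have : ((2:F)/9) = (1/9 : F) + (1/9 : F) := by norm_num
    rw [this, map_add, c9, add_zero]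
  set a := Y k with ha
  set b := Y (Y k) with hb
  set c := Y (Y (Y k)) with hcc
  set N : F := -(1/6 : F) * c * a + (2/9 : F) * b^2 + (1/18 : F) * a * b * Pbar
      + (1/6 : F) * a^2 * Y Pbar - (1/9 : F) * a^2 * Pbar^2 with hNdef
  have hN : H0 * a^2 = N := by
    have hi : a * a⁻¹ = 1 := mul_inv_cancel₀ hk
    rw [hH0, hNdef]
    simp only [div_eq_mul_inv, ← inv_pow]
    linear_combination (-(1/6:F)*c*a + (2/9:F)*b^2*(a*a⁻¹+1) + (1/18:F)*b*Pbar*a) * hi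
  have key : X (H0 * a^2) = -4 * Y kbar * (H0 * a^2) := by
    rw [hN, hNdef]
    simp only [map_add, map_sub, map_neg, Derivation.leibniz, Derivation.leibniz_pow,
      smul_eq_mul, nsmul_eq_mul, c6, c9, c18, c29, h1, h2, h3, h4, hP]
    ring
  have expand : X (H0 * a^2) = X H0 * a^2 + H0 * (2 * a * X a) := by
    rw [Derivation.leibniz, Derivation.leibniz_pow]
    simp only [smul_eq_mul, nsmul_eq_mul]
    ring
  rw [expand, h1] at key
  apply mul_right_cancel₀ (pow_ne_zero 2 hk)
  linear_combination key
end

section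
/- Algebraic core of Lemma 12.2 (the secondary invariant R depends on the first jet of W): Let F be a commutative ℂ-algebra with a conjugation σ (a ring automorphism with σ∘σ = id and σ(z·f) = z̄·σ(f) for z ∈ ℂ, f ∈ F), and let L and L̄ be ℂ-linear derivations of F with σ(L̄(f)) = L(σ(f)) for all f ∈ F. Let K¹, K², K⁶, Z², Z⁵, Z⁸, W, M ∈ F satisfy: W = Z⁵ − σ(Z⁸) − i·K²; M = L̄(K²) − K²·K⁶ − K¹ + σ(K¹) + Z²; and L̄(Z⁵) + L(Z⁸) = Z⁵·K⁶ + Z⁸·σ(K⁶) + i·Z². Then M + σ(M) = (i·L̄(W) − i·K⁶·W + 2·Z²) + σ(i·L̄(W) − i·K⁶·W + 2·Z²). -/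
/-- Algebraic core of Lemma 12.2 (the secondary invariant `R` depends on the
first jet of `W`): in a commutative ℂ-algebra `F` with conjugation `σ` and
conjugation-intertwined derivations `L`, `L̄`, given
`W = Z⁵ - σ Z⁸ - i K²`, `M = L̄ K² - K² K⁶ - K¹ + σ K¹ + Z²` and identity
(12.5), the real part of `M` equals the real part of
`i L̄ W - i K⁶ W + 2 Z²`. -/
theorem stmt_12 {F : Type*} [CommRing F] [Algebra ℂ F]
    (σ : F ≃+* F)
    (hσσ : ∀ f : F, σ (σ f) = f)
    (hσsmul : ∀ (z : ℂ) (f : F), σ (z • f) = (starRingEnd ℂ z) • σ f)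
    (L Lbar : Derivation ℂ F F)
    (hconj : ∀ f : F, σ (Lbar f) = L (σ f))
    (K1 K2 K6 Z2 Z5 Z8 W M : F)
    (hW : W = Z5 - σ Z8 - Complex.I • K2)
    (hM : M = Lbar K2 - K2 * K6 - K1 + σ K1 + Z2)
    (hid : Lbar Z5 + L Z8 = Z5 * K6 + Z8 * σ K6 + Complex.I • Z2) :
    M + σ M
      = (Complex.I • Lbar W - Complex.I • (K6 * W) + 2 * Z2)
        + σ (Complex.I • Lbar W - Complex.I • (K6 * W) + 2 * Z2) := by
  have hLbarσ : ∀ f : F, Lbar (σ f) = σ (L f) := by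
    intro f
    have := hconj (σ f)
    rw [hσσ] at this
    calc Lbar (σ f) = σ (σ (Lbar (σ f))) := (hσσ _).symm
    _ = σ (L f) := by rw [this]
  have hII : (algebraMap ℂ F Complex.I) * (algebraMap ℂ F Complex.I) = -1 := by
    rw [← map_mul, Complex.I_mul_I, map_neg, map_one]
  have hσhid := congrArg σ hid
  subst hW hM
  simp only [map_add, map_sub, map_mul, Derivation.map_smul, Derivation.leibniz,
    hσsmul, hconj, hLbarσ, hσσ, Complex.conj_I, smul_add, smul_sub, smul_smul,
    neg_smul, smul_neg] at hid hσhid ⊢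
  simp only [Algebra.smul_def, map_neg, neg_mul, map_mul, map_ofNat] at hid hσhid ⊢
  linear_combination (-(algebraMap ℂ F Complex.I)) * hid
    + (algebraMap ℂ F Complex.I) * hσhid
    + (Lbar K2 + L (σ K2) - K6 * K2 - σ K6 * σ K2 - Z2 - σ Z2) * hII
end
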